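/- For each odd natural number m and natural numbers n, k with 2k < m, the number of functions f: [n] → [m] arising from a fixed signed partition of [±n] with exactly k pairs of nonzero blocks via the ball-assignment procedure is exactly (m-1)(m-3)⋯(m-2k+1). -/

import Mathlib

open Finset

/-- The set `[±n] = {±1, …, ±n}` as a finset of integers. -/
noncomputable def pmSet (n : ℕ) : Finset ℤ := (Finset.Icc (-(n:ℤ)) (n:ℤ)).erase 0

/-- Negation of a set: `-C`. -/
def negSet (C : Finset ℤ) : Finset ℤ := C.image (fun x => -x)

/-- A signed partition of `[±n]`: a set partition of `[±n]` closed under block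
negation, with at most one self-negative block (the zero-block). -/
def IsSignedPartition (n : ℕ) (P : Finpartition (pmSet n)) : Prop :=
  (∀ C ∈ P.parts, negSet C ∈ P.parts) ∧
  (P.parts.filter (fun C => negSet C = C)).card ≤ 1

/-- `SB n k`: the type-B Stirling number of the second kind, i.e. the number of
signed partitions of `[±n]` with exactly `k` pairs of nonzero blocks. -/
noncomputable def SB (n k : ℕ) : ℕ :=
  Nat.card {P : Finpartition (pmSet n) //
    IsSignedPartition n P ∧ (P.parts.filter (fun C => negSet C ≠ C)).card = 2 * k}

/-- The minimal positive elements of the pairs of nonzero blocks, listed in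
increasing order; each key `a` identifies the positive block `B` of its pair
(the block of the pair containing the minimal positive element). -/
noncomputable def pairKeys (n : ℕ) (P : Finpartition (pmSet n)) : List ℕ :=
  ((Finset.Icc 1 n).filter (fun (a : ℕ) =>
      negSet (P.part (a : ℤ)) ≠ P.part (a : ℤ) ∧
      ((P.part (a : ℤ) ∪ negSet (P.part (a : ℤ))).filter (fun x => 0 < x)).min
        = ((a : ℤ) : WithTop ℤ))).sort (· ≤ ·)

/-- The next value after `p` in cyclic order on `{2,…,m}` which is not in `used`. -/
def nextUnused (m : ℕ) (used : Finset ℕ) (p : ℕ) : ℕ :=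
  ((List.range' (p + 1) (m - p) ++ List.range' 2 (p - 1)).find?
    (fun q => decide (q ∉ used))).getD 0

/-- One step of the ball-assignment procedure: for the pair of nonzero blocks
whose positive block `B` contains the key `a`, send the positive elements of `B`
to the chosen value `p` and the positive elements of `-B` to the next unused
value after `p` in cyclic order on `{2,…,m}`; record the validity of the choice
(`p` must be a previously unused value in `{2,…,m}`) and the used values. -/
noncomputable def assignStep (n m : ℕ) (P : Finpartition (pmSet n))
    (st : Bool × Finset ℕ × (ℕ → ℕ)) (ap : ℕ × ℕ) : Bool × Finset ℕ × (ℕ → ℕ) :=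
  let a := ap.1
  let p := ap.2
  let B := P.part (a : ℤ)
  let q := nextUnused m st.2.1 p
  (st.1 && decide (2 ≤ p) && decide (p ≤ m) && decide (p ∉ st.2.1),
   insert p (insert q st.2.1),
   fun i => if (i : ℤ) ∈ B then p else if -(i : ℤ) ∈ B then q else st.2.2 i)

/-- Run the ball-assignment procedure of Bagno–Garber on a signed partition `P`
with a list of choices, one choice per pair of nonzero blocks (pairs processed
in increasing order of minimal positive element).  Initially the positive
elements of the zero-block are sent to `1` and the value `1` is marked used.
Returns (validity flag, used values, the assignment `f : [n] → [m]`). -/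
noncomputable def assignRun (n m : ℕ) (P : Finpartition (pmSet n)) (choices : List ℕ) :
    Bool × Finset ℕ × (ℕ → ℕ) :=
  ((pairKeys n P).zip choices).foldl (assignStep n m P) (true, {1}, fun _ => 1)

/-!
Write `f_c` for the assignment produced by a choice list `c`. The key (least positive element) of
the `j`-th pair lies in its positive block, and no later step touches it, so `f_c` sends it to
`c[j]`: the map `c ↦ f_c` is injective on choice lists of length `k`. The partition has exactly
`k` pairs, since negation is a fixed-point-free involution on the nonzero blocks and exactly one
block of each pair holds the pair's least positive element. Finally, as long as two values of
`{2,…,m}` are free, a valid choice `p` and its cyclic successor `q ≠ p` use up two of them, so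
the `j`-th choice has `m - 1 - 2j` options.
-/

theorem Finset.two_mul_card_filter_of_involution {α : Type*} {s : Finset α} {p : α → Prop}
    [DecidablePred p] (σ : α → α) (hσ : ∀ a ∈ s, σ a ∈ s) (hσσ : ∀ a ∈ s, σ (σ a) = a)
    (hp : ∀ a ∈ s, p (σ a) ↔ ¬p a) :
    2 * #(s.filter p) = #s := by
  have hswap : #(s.filter p) = #(s.filter fun a ↦ ¬p a) := by
    refine card_nbij' σ σ ?_ ?_ (fun a ha ↦ hσσ a (mem_filter.1 ha).1)
      (fun a ha ↦ hσσ a (mem_filter.1 ha).1) <;>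
    · intro a ha
      simp only [coe_filter, Set.mem_ofPred_eq] at ha ⊢
      simp [hσ a ha.1, hp a ha.1, ha.2]
  have := card_filter_add_card_filter_not (s := s) p
  omega

lemma mem_negSet {C : Finset ℤ} {x : ℤ} : x ∈ negSet C ↔ -x ∈ C := by
  simp [negSet, neg_eq_iff_eq_neg]

lemma negSet_negSet (C : Finset ℤ) : negSet (negSet C) = C := by
  ext x; simp [mem_negSet]

lemma natCast_mem_pmSet {n a : ℕ} : (a : ℤ) ∈ pmSet n ↔ a ∈ Icc 1 n := by
  simp only [pmSet, mem_erase, mem_Icc]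
  omega

def posMin (C : Finset ℤ) : WithTop ℤ := ((C ∪ negSet C).filter (0 < ·)).min

lemma posMin_negSet (C : Finset ℤ) : posMin (negSet C) = posMin C := by
  rw [posMin, posMin, negSet_negSet, union_comm]

lemma exists_posMin_eq {C : Finset ℤ} {y : ℤ} (hy : y ∈ C) (hy0 : y ≠ 0) :
    ∃ x, 0 < x ∧ x ∈ C ∪ negSet C ∧ posMin C = x := by
  have hne : ((C ∪ negSet C).filter (0 < ·)).Nonempty := by
    rcases hy0.lt_or_gt with h | h
    · exact ⟨-y, by simp [mem_negSet, hy, h]⟩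
    · exact ⟨y, by simp [hy, h]⟩
  obtain ⟨x, hx⟩ := min_of_nonempty hne
  obtain ⟨hxC, hx0⟩ := mem_filter.1 (mem_of_min hx)
  exact ⟨x, hx0, hxC, hx⟩

/-- `C` is the positive block `B_j` of its pair `(B_j, -B_j)`, as `pairKeys` chooses it. -/
def ContainsPosMin (C : Finset ℤ) : Prop := ∃ x ∈ C, (x : WithTop ℤ) = posMin C

instance : DecidablePred ContainsPosMin := fun C ↦
  inferInstanceAs (Decidable (∃ x ∈ C, (x : WithTop ℤ) = posMin C))

section Partition

variable {n : ℕ} {P : Finpartition (pmSet n)}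

lemma ne_zero_of_mem_parts {C : Finset ℤ} (hC : C ∈ P.parts) {x : ℤ} (hx : x ∈ C) : x ≠ 0 :=
  (mem_erase.1 (P.le hC hx)).1

lemma containsPosMin_negSet_iff (hP : IsSignedPartition n P) {C : Finset ℤ} (hC : C ∈ P.parts)
    (hCneg : negSet C ≠ C) : ContainsPosMin (negSet C) ↔ ¬ContainsPosMin C := by
  obtain ⟨y, hy⟩ := P.nonempty_of_mem_parts hC
  obtain ⟨x, -, hxC, hx⟩ := exists_posMin_eq hy (ne_zero_of_mem_parts hC hy)
  simp only [ContainsPosMin, posMin_negSet, hx, WithTop.coe_eq_coe, exists_eq_right]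
  refine ⟨fun hneg hpos ↦ hCneg (P.eq_of_mem_parts (hP.1 C hC) hC hneg hpos), fun hpos ↦ ?_⟩
  exact (mem_union.1 hxC).resolve_left hpos

lemma natCast_mem_pmSet_of_mem_pairKeys {a : ℕ} (ha : a ∈ pairKeys n P) : (a : ℤ) ∈ pmSet n :=
  natCast_mem_pmSet.2 (mem_filter.1 ((mem_sort _).1 ha)).1

lemma posMin_part_of_mem_pairKeys {a : ℕ} (ha : a ∈ pairKeys n P) :
    posMin (P.part (a : ℤ)) = (a : ℤ) :=
  (mem_filter.1 ((mem_sort _).1 ha)).2.2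

lemma length_pairKeys_eq_card :
    (pairKeys n P).length =
      #((P.parts.filter fun C ↦ negSet C ≠ C).filter ContainsPosMin) := by
  rw [pairKeys, length_sort]
  refine card_bij (fun a _ ↦ P.part (a : ℤ)) ?_ ?_ ?_
  · intro a ha
    obtain ⟨haI, hneg, hmin⟩ := mem_filter.1 ha
    have ha' := natCast_mem_pmSet.2 haI
    exact mem_filter.2 ⟨mem_filter.2 ⟨P.part_mem.2 ha', hneg⟩, a, P.mem_part ha', hmin.symm⟩
  · intro a ha b hb hab
    have : ((a : ℤ) : WithTop ℤ) = (b : ℤ) := by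
      rw [← (mem_filter.1 ha).2.2, ← (mem_filter.1 hb).2.2]
      exact congrArg posMin hab
    exact_mod_cast this
  · intro C hC
    obtain ⟨⟨hCP, hneg⟩, x, hxC, hx⟩ := by simpa only [mem_filter] using hC
    have hxpos : 0 < x := (mem_filter.1 (mem_of_min hx.symm)).2
    lift x to ℕ using hxpos.le
    have hxI := natCast_mem_pmSet.1 (P.le hCP hxC)
    have hpart : P.part (x : ℤ) = C := P.part_eq_of_mem hCP hxC
    exact ⟨x, mem_filter.2 ⟨hxI, hpart ▸ ⟨hneg, hx.symm⟩⟩, hpart⟩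

lemma length_pairKeys {k : ℕ} (hP : IsSignedPartition n P)
    (hk : #(P.parts.filter fun C ↦ negSet C ≠ C) = 2 * k) :
    (pairKeys n P).length = k := by
  have hhalf := two_mul_card_filter_of_involution (s := P.parts.filter fun C ↦ negSet C ≠ C)
    (p := ContainsPosMin) negSet ?_ (fun C _ ↦ negSet_negSet C) ?_
  · rw [length_pairKeys_eq_card]
    omega
  · intro C hC
    obtain ⟨hCP, hneg⟩ := mem_filter.1 hC
    exact mem_filter.2 ⟨hP.1 C hCP, by rwa [negSet_negSet, ne_comm]⟩
  · intro C hC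
    obtain ⟨hCP, hneg⟩ := mem_filter.1 hC
    exact containsPosMin_negSet_iff hP hCP hneg

end Partition

section Evaluation

variable {n m : ℕ} {P : Finpartition (pmSet n)}

lemma notMem_part_of_mem_pairKeys (hP : IsSignedPartition n P) {a b : ℕ}
    (ha : a ∈ pairKeys n P) (hb : b ∈ pairKeys n P) (hab : a ≠ b) :
    (a : ℤ) ∉ P.part (b : ℤ) ∧ -(a : ℤ) ∉ P.part (b : ℤ) := by
  have hbP : P.part (b : ℤ) ∈ P.parts := P.part_mem.2 (natCast_mem_pmSet_of_mem_pairKeys hb)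
  suffices posMin (P.part (a : ℤ)) ≠ posMin (P.part (b : ℤ)) by
    refine ⟨fun h ↦ this ?_, fun h ↦ this ?_⟩
    · rw [P.part_eq_of_mem hbP h]
    · rw [P.part_eq_of_mem (hP.1 _ hbP) (mem_negSet.2 h), posMin_negSet]
  rw [posMin_part_of_mem_pairKeys ha, posMin_part_of_mem_pairKeys hb]
  exact_mod_cast hab

lemma foldl_assignStep_apply_of_forall_notMem {j : ℕ} {l : List (ℕ × ℕ)}
    (hl : ∀ ap ∈ l, (j : ℤ) ∉ P.part (ap.1 : ℤ) ∧ -(j : ℤ) ∉ P.part (ap.1 : ℤ))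
    (s : Bool × Finset ℕ × (ℕ → ℕ)) :
    (l.foldl (assignStep n m P) s).2.2 j = s.2.2 j := by
  induction l generalizing s with
  | nil => rfl
  | cons ap l ih =>
    rw [List.foldl_cons, ih (fun ap' h ↦ hl ap' (List.mem_cons_of_mem _ h))]
    obtain ⟨h1, h2⟩ := hl ap List.mem_cons_self
    simp only [assignStep, if_neg h1, if_neg h2]

lemma foldl_assignStep_zip_apply_getElem {L ps : List ℕ}
    (hself : ∀ a ∈ L, (a : ℤ) ∈ P.part (a : ℤ))
    (hsep : L.Pairwise fun (a b : ℕ) ↦ (a : ℤ) ∉ P.part (b : ℤ) ∧ -(a : ℤ) ∉ P.part (b : ℤ))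
    (s : Bool × Finset ℕ × (ℕ → ℕ)) {i : ℕ} (hiL : i < L.length) (hic : i < ps.length) :
    ((L.zip ps).foldl (assignStep n m P) s).2.2 L[i] = ps[i] := by
  induction L generalizing ps s i with
  | nil => simp at hiL
  | cons a L ih =>
    obtain _ | ⟨p, ps⟩ := ps
    · simp at hic
    obtain ⟨hhead, htail⟩ := List.pairwise_cons.1 hsep
    rw [List.zip_cons_cons, List.foldl_cons]
    cases i with
    | zero =>
      rw [List.getElem_cons_zero, List.getElem_cons_zero,
        foldl_assignStep_apply_of_forall_notMem fun ap hap ↦ hhead ap.1 (List.of_mem_zip hap).1]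
      simp [assignStep, hself a List.mem_cons_self]
    | succ i => exact ih (fun b hb ↦ hself b (List.mem_cons_of_mem _ hb)) htail _ _ _

lemma assignRun_apply_pairKeys_getElem (hP : IsSignedPartition n P) (ps : List ℕ) {i : ℕ}
    (hiL : i < (pairKeys n P).length) (hic : i < ps.length) :
    (assignRun n m P ps).2.2 (pairKeys n P)[i] = ps[i] :=
  foldl_assignStep_zip_apply_getElem (L := pairKeys n P)
    (fun _ ha ↦ P.mem_part (natCast_mem_pmSet_of_mem_pairKeys ha))
    ((sort_nodup _ _).pairwise_of_forall_ne fun _ ha _ hb hab ↦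
      notMem_part_of_mem_pairKeys hP ha hb hab) _ hiL hic

lemma injOn_assignRun (hP : IsSignedPartition n P) :
    Set.InjOn (fun ps ↦ (assignRun n m P ps).2.2) {ps | ps.length = (pairKeys n P).length} := by
  intro ps₁ h₁ ps₂ h₂ h
  refine List.ext_getElem (h₁.trans h₂.symm) fun i hi₁ hi₂ ↦ ?_
  rw [← assignRun_apply_pairKeys_getElem hP ps₁ (h₁ ▸ hi₁) hi₁,
    ← assignRun_apply_pairKeys_getElem hP ps₂ (h₁ ▸ hi₁) hi₂]
  exact congrFun h _

end Evaluation

section Counting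

variable {m : ℕ}

lemma nextUnused_spec {U : Finset ℕ} {p : ℕ} (hp : p ∈ Icc 2 m \ U)
    (hfree : 2 ≤ #(Icc 2 m \ U)) :
    nextUnused m U p ∈ Icc 2 m \ U ∧ nextUnused m U p ≠ p := by
  obtain ⟨hp2, hpm⟩ := mem_Icc.1 (mem_sdiff.1 hp).1
  set L := List.range' (p + 1) (m - p) ++ List.range' 2 (p - 2)
  have hL : ∀ q, q ∈ L ↔ q ∈ (Icc 2 m).erase p := by
    intro q
    simp only [L, List.mem_append, List.mem_range'_1, mem_erase, mem_Icc]
    omega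
  obtain ⟨x, hx⟩ : ((Icc 2 m \ U).erase p).Nonempty := by
    rw [← card_pos, card_erase_of_mem hp]
    omega
  obtain ⟨hxp, hxI, hxU⟩ := by simpa only [mem_erase, mem_sdiff] using hx
  obtain ⟨q, hq⟩ := Option.isSome_iff_exists.1
    (List.find?_isSome (p := fun q ↦ decide (q ∉ U)).2
      ⟨x, (hL x).2 (mem_erase.2 ⟨hxp, hxI⟩), decide_eq_true hxU⟩)
  have hnext : nextUnused m U p = q := by
    have hsplit : List.range' 2 (p - 1) = List.range' 2 (p - 2) ++ [p] := by
      rw [show p - 1 = p - 2 + 1 by omega, List.range'_concat]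
      congr 2
      omega
    rw [nextUnused, hsplit, ← List.append_assoc, List.find?_append, hq]
    rfl
  obtain ⟨hqp, hqI⟩ := mem_erase.1 ((hL q).1 (List.mem_of_find?_eq_some hq))
  rw [hnext]
  exact ⟨mem_sdiff.2 ⟨hqI, of_decide_eq_true (List.find?_some (p := fun q ↦ decide (q ∉ U)) hq)⟩,
    hqp⟩

def usedStep (m : ℕ) (st : Bool × Finset ℕ) (p : ℕ) : Bool × Finset ℕ :=
  (st.1 && decide (2 ≤ p) && decide (p ≤ m) && decide (p ∉ st.2),
   insert p (insert (nextUnused m st.2 p) st.2))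

lemma assignRun_fst {n : ℕ} (P : Finpartition (pmSet n)) {ps : List ℕ}
    (hps : ps.length ≤ (pairKeys n P).length) :
    (assignRun n m P ps).1 = (ps.foldl (usedStep m) (true, {1})).1 := by
  have hproj := List.foldl_hom (fun s : Bool × Finset ℕ × (ℕ → ℕ) ↦ (s.1, s.2.1))
    (g₁ := assignStep n m P) (g₂ := fun st ap ↦ usedStep m st ap.2)
    (l := (pairKeys n P).zip ps) (init := (true, {1}, fun _ ↦ 1)) (fun _ _ ↦ rfl)
  calc (assignRun n m P ps).1
      = (((pairKeys n P).zip ps).foldl (fun st ap ↦ usedStep m st ap.2) (true, {1})).1 :=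
        congrArg Prod.fst hproj.symm
    _ = _ := by rw [← List.foldl_map, List.map_snd_zip hps]

lemma foldl_usedStep_fst (ps : List ℕ) (b : Bool) (U : Finset ℕ) :
    (ps.foldl (usedStep m) (b, U)).1 = (b && (ps.foldl (usedStep m) (true, U)).1) := by
  induction ps generalizing b U with
  | nil => simp
  | cons p ps ih =>
    simp only [List.foldl_cons, usedStep]
    rw [ih, ih (true && _ && _ && _)]
    simp only [Bool.true_and, Bool.and_assoc]

lemma foldl_usedStep_cons_fst (p : ℕ) (ps : List ℕ) (U : Finset ℕ) :
    ((p :: ps).foldl (usedStep m) (true, U)).1 = true ↔ p ∈ Icc 2 m \ U ∧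
      (ps.foldl (usedStep m) (true, insert p (insert (nextUnused m U p) U))).1 = true := by
  rw [List.foldl_cons, usedStep, foldl_usedStep_fst]
  simp [and_assoc]

def validChoices (m : ℕ) : ℕ → Finset ℕ → Finset (List ℕ)
  | 0, _ => {[]}
  | l + 1, U => (Icc 2 m \ U).biUnion fun p ↦
      (validChoices m l (insert p (insert (nextUnused m U p) U))).image (p :: ·)

lemma mem_validChoices {l : ℕ} {U : Finset ℕ} {ps : List ℕ} :
    ps ∈ validChoices m l U ↔ ps.length = l ∧ (ps.foldl (usedStep m) (true, U)).1 = true := by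
  induction l generalizing U ps with
  | zero => cases ps <;> simp [validChoices]
  | succ l ih =>
    cases ps with
    | nil => simp [validChoices]
    | cons p ps =>
      rw [foldl_usedStep_cons_fst]
      simp only [validChoices, mem_biUnion, mem_image, List.cons.injEq, ih, List.length_cons,
        Nat.add_right_cancel_iff]
      constructor
      · rintro ⟨p, hp, ps, ⟨hlen, hvalid⟩, rfl, rfl⟩
        exact ⟨hlen, hp, hvalid⟩
      · rintro ⟨hlen, hp, hvalid⟩
        exact ⟨p, hp, ps, ⟨hlen, hvalid⟩, rfl, rfl⟩

lemma card_validChoices {l : ℕ} {U : Finset ℕ} (hU : 2 * l ≤ #(Icc 2 m \ U)) :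
    #(validChoices m l U) = ∏ j ∈ range l, (#(Icc 2 m \ U) - 2 * j) := by
  induction l generalizing U with
  | zero => simp [validChoices]
  | succ l ih =>
    have hbranch : ∀ p ∈ Icc 2 m \ U,
        #((validChoices m l (insert p (insert (nextUnused m U p) U))).image (p :: ·)) =
          ∏ j ∈ range l, (#(Icc 2 m \ U) - 2 * (j + 1)) := by
      intro p hp
      obtain ⟨hq, hqp⟩ := nextUnused_spec hp (by omega)
      have hcard : #(Icc 2 m \ insert p (insert (nextUnused m U p) U)) = #(Icc 2 m \ U) - 2 := by
        rw [sdiff_insert, sdiff_insert, card_erase_of_mem (mem_erase.2 ⟨hqp.symm, hp⟩),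
          card_erase_of_mem hq]
        omega
      rw [card_image_of_injective _ (List.cons_injective), ih (by omega), hcard]
      exact prod_congr rfl fun j _ ↦ by omega
    have hdisj : (↑(Icc 2 m \ U) : Set ℕ).PairwiseDisjoint fun p ↦
        (validChoices m l (insert p (insert (nextUnused m U p) U))).image (p :: ·) := by
      intro p₁ _ p₂ _ hne
      simp only [Function.onFun, disjoint_left, mem_image]
      rintro _ ⟨ps₁, -, rfl⟩ ⟨ps₂, -, h⟩
      exact hne (List.cons_eq_cons.1 h).1.symm
    rw [validChoices, card_biUnion hdisj, sum_congr rfl hbranch, sum_const, smul_eq_mul,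
      prod_range_succ', mul_comm]
    simp

end Counting

theorem card_assignments_general (n m k : ℕ) (hmk : 2 * k < m)
    (P : Finpartition (pmSet n)) (hP : IsSignedPartition n P)
    (hk : (P.parts.filter (fun C => negSet C ≠ C)).card = 2 * k) :
    Nat.card {f : ℕ → ℕ // ∃ choices : List ℕ, choices.length = k ∧
        (assignRun n m P choices).1 = true ∧ f = (assignRun n m P choices).2.2} =
      ∏ j ∈ Finset.range k, (m - (2 * j + 1)) := by
  classical
  have hlen : (pairKeys n P).length = k := length_pairKeys hP hk
  have hvalid (ps : List ℕ) :
      ps ∈ validChoices m k {1} ↔ ps.length = k ∧ (assignRun n m P ps).1 = true := by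
    rw [mem_validChoices]
    exact and_congr_right fun hps ↦ by rw [assignRun_fst P (hps.trans hlen.symm).le]
  have hfree : #(Icc 2 m \ {1}) = m - 1 := by
    rw [sdiff_singleton_eq_erase, erase_eq_of_notMem (by simp), Nat.card_Icc]
    omega
  calc _ = #((validChoices m k {1}).image fun ps ↦ (assignRun n m P ps).2.2) := by
        rw [← Nat.card_eq_finsetCard]
        refine Nat.card_congr (Equiv.subtypeEquivRight fun f ↦ ?_)
        simp only [mem_image, hvalid, and_assoc, @eq_comm _ f]
    _ = #(validChoices m k {1}) := card_image_of_injOn fun ps₁ h₁ ps₂ h₂ ↦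
        injOn_assignRun hP (((hvalid ps₁).1 h₁).1.trans hlen.symm)
          (((hvalid ps₂).1 h₂).1.trans hlen.symm)
    _ = _ := by
        rw [card_validChoices (by omega), hfree]
        exact prod_congr rfl fun j _ ↦ by omega

/-- For odd `m` and a fixed signed partition of `[±n]` with exactly `k` pairs of
nonzero blocks (`2k < m`), the number of functions `f : [n] → [m]` arising from
it via the ball-assignment procedure is `(m-1)(m-3)⋯(m-2k+1)`. -/
theorem card_assignments (n m k : ℕ) (hm : Odd m) (hmk : 2 * k < m)
    (P : Finpartition (pmSet n)) (hP : IsSignedPartition n P)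
    (hk : (P.parts.filter (fun C => negSet C ≠ C)).card = 2 * k) :
    Nat.card {f : ℕ → ℕ // ∃ choices : List ℕ, choices.length = k ∧
        (assignRun n m P choices).1 = true ∧ f = (assignRun n m P choices).2.2} =
      ∏ j ∈ Finset.range k, (m - (2 * j + 1)) :=
  card_assignments_general n m k hmk P hP hk
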